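/- With 𝒯 as the composition of midpoint-slides 𝓜₁ ∘ ⋯ ∘ 𝓜ₙ on monotone distributions of n+1 beads on [μ,∞), and λ(X) = x_{n+1} − x₁ (difference of last and first gaps), one has λ(𝒯(X)) ≤ (1 − 2^{−n}) λ(X) for all monotone X. -/
import Mathlib


/-- `A` is a monotone bead distribution of `n` beads on `[μ,∞)`.
We use the convention `A 0 = μ`, so the beads are `A 1 < ⋯ < A n` with
`μ ≤ A 1` and nondecreasing successive gaps. -/
def BeadMono (n : ℕ) (μ : ℝ) (A : ℕ → ℝ) : Prop :=
  A 0 = μ ∧ A 0 ≤ A 1 ∧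
  (∀ k, 2 ≤ k → k ≤ n → A (k - 1) < A k) ∧
  (∀ k, 2 ≤ k → k ≤ n → A (k - 1) - A (k - 2) ≤ A k - A (k - 1))

/-- One admissible bead slide: move the `k`-th bead to the right by `δ ≥ 0`
so that the result is again monotone. -/
def BeadSlide (n : ℕ) (μ : ℝ) (A B : ℕ → ℝ) : Prop :=
  ∃ k δ, 1 ≤ k ∧ k ≤ n ∧ 0 ≤ δ ∧
    B = Function.update A k (A k + δ) ∧ BeadMono n μ B

/-- `BeadReach n μ A B`: `B` is obtained from `A` by finitely many admissible slides. -/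
def BeadReach (n : ℕ) (μ : ℝ) : (ℕ → ℝ) → (ℕ → ℝ) → Prop :=
  Relation.ReflTransGen (BeadSlide n μ)

/-- The midpoint slide: replace the `k`-th coordinate by the midpoint of its
neighbors (with the convention `X 0 = μ`). -/
noncomputable def Mid (k : ℕ) (X : ℕ → ℝ) : ℕ → ℝ :=
  Function.update X k ((X (k - 1) + X (k + 1)) / 2)

/-- `Tmap n = Mid 1 ∘ Mid 2 ∘ ⋯ ∘ Mid n`. -/
noncomputable def Tmap : ℕ → (ℕ → ℝ) → (ℕ → ℝ)
  | 0, X => X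
  | n + 1, X => Tmap n (Mid (n + 1) X)


private lemma sum_geo_aux (n : ℕ) :
    ∑ k ∈ Finset.range n, ((1:ℝ)/2)^(k+1) = 1 - (1/2)^n := by
  induction n with
  | zero => simp
  | succ m ih => rw [Finset.sum_range_succ, ih]; ring

private lemma sum_kgeo_aux (n : ℕ) :
    ∑ k ∈ Finset.range n, (k:ℝ) * ((1:ℝ)/2)^(k+1) = 1 - ((n:ℝ)+1) * (1/2)^n := by
  induction n with
  | zero => simp
  | succ m ih => rw [Finset.sum_range_succ, ih]; push_cast; ring

private lemma tmap_fix_aux (n : ℕ) (X : ℕ → ℝ) (j : ℕ) (hj : j = 0 ∨ n + 1 ≤ j) :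
    Tmap n X j = X j := by
  induction n generalizing X with
  | zero => rfl
  | succ m ih =>
    have h' : j = 0 ∨ m + 1 ≤ j := hj.imp id (fun h => by omega)
    rw [show Tmap (m+1) X = Tmap m (Mid (m+1) X) from rfl, ih _ h']
    have hne : j ≠ m + 1 := by omega
    simp [Mid, Function.update_of_ne hne]

private lemma tmap_top_aux (m : ℕ) (X : ℕ → ℝ) :
    Tmap (m+1) X (m+1) = (X m + X (m+2)) / 2 := by
  rw [show Tmap (m+1) X = Tmap m (Mid (m+1) X) from rfl,
    tmap_fix_aux m _ (m+1) (Or.inr le_rfl)]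
  simp [Mid]

private lemma tmap_one_aux (n : ℕ) (X : ℕ → ℝ) :
    Tmap n X 1 = (∑ k ∈ Finset.range n, X k * ((1:ℝ)/2)^(k+1)) + X (n+1) * ((1:ℝ)/2)^n := by
  induction n generalizing X with
  | zero => simp [Tmap]
  | succ m ih =>
    rw [show Tmap (m+1) X = Tmap m (Mid (m+1) X) from rfl, ih]
    have h1 : ∀ k ∈ Finset.range m, Mid (m+1) X k * ((1:ℝ)/2)^(k+1)
        = X k * ((1:ℝ)/2)^(k+1) := by
      intro k hk
      have hne : k ≠ m + 1 := by
        have := Finset.mem_range.mp hk; omega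
      simp [Mid, Function.update_of_ne hne]
    rw [Finset.sum_congr rfl h1]
    have h2 : Mid (m+1) X (m+1) = (X m + X (m+2)) / 2 := by simp [Mid]
    rw [h2, Finset.sum_range_succ]
    ring

/-- `λ(𝒯 X) ≤ (1 - 2⁻ⁿ) λ(X)` where `λ(X) = x_{n+1} - x₁` is the
difference of the last and first gaps. -/
theorem tmap_lambda_contraction (n : ℕ) (hn : 1 ≤ n) (μ : ℝ) (X : ℕ → ℝ)
    (hX : BeadMono (n + 1) μ X) :
    ((Tmap n X) (n + 1) - (Tmap n X) n) - ((Tmap n X) 1 - μ) ≤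
      (1 - (1 / 2) ^ n) * ((X (n + 1) - X n) - (X 1 - μ)) := by
  obtain ⟨m, rfl⟩ : ∃ m, n = m + 1 := ⟨n - 1, by omega⟩
  obtain ⟨h0, h01, hlt, hmono⟩ := hX
  -- gap monotonicity from the first gap
  have hgap1 : ∀ k, k ≤ m + 2 → 1 ≤ k → X 1 - μ ≤ X k - X (k-1) := by
    intro k
    induction k with
    | zero => intro _ h; omega
    | succ j ih =>
      intro hk _
      rcases Nat.eq_zero_or_pos j with h0j | h1j
      · subst h0j
        simp [h0]
      · have h2 := hmono (j+1) (by omega) (by omega)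
        have h3 := ih (by omega) h1j
        have e1 : j + 1 - 1 = j := rfl
        have e2 : j + 1 - 2 = j - 1 := by omega
        rw [e1, e2] at h2
        show X 1 - μ ≤ X (j+1) - X j
        linarith
  have hcum : ∀ k, k ≤ m + 2 → (k:ℝ) * (X 1 - μ) ≤ X k - μ := by
    intro k
    induction k with
    | zero => intro _; simp [h0]
    | succ j ih =>
      intro hk
      have h3 := hgap1 (j+1) hk (by omega)
      have h4 := ih (by omega)
      have e1 : j + 1 - 1 = j := rfl
      rw [e1] at h3
      push_cast
      linarith
  set c : ℝ := ((1:ℝ)/2)^(m+1) with hc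
  have hcpos : (0:ℝ) ≤ c := by positivity
  set S : ℝ := ∑ k ∈ Finset.range (m+1), X k * ((1:ℝ)/2)^(k+1) with hSdef
  have hterm : ∀ k ∈ Finset.range (m+1),
      (μ + (k:ℝ)*(X 1 - μ)) * ((1:ℝ)/2)^(k+1) ≤ X k * ((1:ℝ)/2)^(k+1) := by
    intro k hk
    apply mul_le_mul_of_nonneg_right _ (by positivity)
    have := hcum k (by have := Finset.mem_range.mp hk; omega)
    linarith
  have expand : ∑ k ∈ Finset.range (m+1), (μ + (k:ℝ)*(X 1 - μ)) * ((1:ℝ)/2)^(k+1)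
      = μ * (1 - c) + (X 1 - μ) * (1 - ((m:ℝ)+2)*c) := by
    have step : ∀ k : ℕ, (μ + (k:ℝ)*(X 1 - μ)) * ((1:ℝ)/2)^(k+1)
        = μ * ((1:ℝ)/2)^(k+1) + (X 1 - μ) * ((k:ℝ) * ((1:ℝ)/2)^(k+1)) := by
      intro k; ring
    simp_rw [step]
    rw [Finset.sum_add_distrib, ← Finset.mul_sum, ← Finset.mul_sum,
      sum_geo_aux, sum_kgeo_aux]
    push_cast
    ring
  have hS : μ * (1 - c) + (X 1 - μ) * (1 - ((m:ℝ)+2)*c) ≤ S := by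
    rw [← expand]
    exact Finset.sum_le_sum hterm
  have hmul : ((m:ℝ)+1) * c * (X 1 - μ) ≤ c * (X (m+1) - μ) := by
    have h := hcum (m+1) (by omega)
    push_cast at h
    calc ((m:ℝ)+1) * c * (X 1 - μ) = c * (((m:ℝ)+1) * (X 1 - μ)) := by ring
      _ ≤ c * (X (m+1) - μ) := mul_le_mul_of_nonneg_left h hcpos
  have hgap : X (m+1) - X m ≤ X (m+2) - X (m+1) := by
    have h2 := hmono (m+2) (by omega) (by omega)
    have e1 : m + 2 - 1 = m + 1 := rfl
    have e2 : m + 2 - 2 = m := rfl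
    rw [e1, e2] at h2
    linarith
  have ht1 : Tmap (m+1) X (m+1+1) = X (m+2) :=
    tmap_fix_aux (m+1) X (m+2) (Or.inr le_rfl)
  have ht2 : Tmap (m+1) X (m+1) = (X m + X (m+2)) / 2 := tmap_top_aux m X
  have ht3 : Tmap (m+1) X 1 = S + X (m+1+1) * c := by
    rw [tmap_one_aux]
  rw [ht1, ht2, ht3]
  have goal' : (1 - (1/2:ℝ)^(m+1)) = 1 - c := rfl
  nlinarith [hS, hmul, hgap]
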